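/- arXiv:1203.6504 — 10 statements merged into one kernel-verified Lean document; each statement's English description precedes it below -/
import Mathlib

section
/- Let X be a set, G a subgroup of Equiv.Perm X, {α_i : i ∈ I} a complete set of representatives of the orbits of G on X, and for each i ∈ I let π_i ∈ G be such that the point stabilizer G_{α_i} is contained in the centralizer C_G(π_i). Then there is a well-defined map f : X → Equiv.Perm X satisfying f(α_i · g) = g⁻¹ π_i g for all i ∈ I and g ∈ G, and the binary operation x ▷ y := (f(y))(x) makes (X, ▷) a rack whose operator group is contained in G. -/
/-- A rack: right multiplications are bijections, and self-distributivity holds. -/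
def IsRack {X : Type*} (op : X → X → X) : Prop :=
  (∀ y : X, Function.Bijective fun x => op x y) ∧
  ∀ x y z : X, op (op x y) z = op (op x z) (op y z)

/-- The operator group of a binary operation: the subgroup of `Equiv.Perm X` generated by
the permutations `x ↦ x ▷ y` for `y ∈ X`. -/
def OpGroup {X : Type*} (op : X → X → X) : Subgroup (Equiv.Perm X) :=
  Subgroup.closure {σ : Equiv.Perm X | ∃ y : X, ∀ x : X, σ x = op x y}

/-!
Two elements of `G` sending `α i` to the same point differ by an element of the stabilizer
of `α i`, which commutes with `π i`; so they conjugate `π i` to the same permutation, and `f` is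
well defined. By construction `f (σ y) = σ * f y * σ⁻¹` for `σ ∈ G`, and `f y ∈ G`. Taking
`σ = f z` gives `f (f z y) = f z * f y * (f z)⁻¹`, which is self-distributivity.
-/

open Equiv

section

variable {X : Type*}

theorem isRack_of_map_conj (f : X → Perm X) (hf : ∀ y z, f (f z y) = f z * f y * (f z)⁻¹) :
    IsRack fun x y => f y x :=
  ⟨fun y => (f y).bijective, fun x y z => by simp [hf, Perm.mul_apply]⟩

theorem opGroup_le_of_forall_mem {G : Subgroup (Perm X)} (f : X → Perm X) (hf : ∀ y, f y ∈ G) :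
    OpGroup (fun x y => f y x) ≤ G := by
  rw [OpGroup, Subgroup.closure_le]
  rintro σ ⟨y, hy⟩
  exact (Equiv.ext hy : σ = f y) ▸ hf y

theorem conj_eq_conj_of_apply_eq {G : Subgroup (Perm X)} {a : X} {p : Perm X}
    (hcent : ∀ k ∈ G, k a = a → k * p = p * k) {g h : Perm X} (hg : g ∈ G) (hh : h ∈ G)
    (hgh : g a = h a) : g * p * g⁻¹ = h * p * h⁻¹ := by
  have hstab : (h⁻¹ * g) a = a := by simp [Perm.mul_apply, hgh]
  have hcomm := hcent _ (mul_mem (inv_mem hh) hg) hstab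
  calc g * p * g⁻¹ = h * ((h⁻¹ * g) * p) * g⁻¹ := by group
    _ = h * (p * (h⁻¹ * g)) * g⁻¹ := by rw [hcomm]
    _ = h * p * h⁻¹ := by group

variable {I : Type*} {G : Subgroup (Perm X)} {α : I → X} {π : I → Perm X}

theorem exists_map_apply_eq_conj (hα : ∀ x : X, ∃! i : I, ∃ g ∈ G, g (α i) = x)
    (hcent : ∀ i : I, ∀ g ∈ G, g (α i) = α i → g * π i = π i * g) :
    ∃ f : X → Perm X, ∀ i : I, ∀ g ∈ G, f (g (α i)) = g * π i * g⁻¹ := by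
  choose ix gx hgxG hgxα using fun x => (hα x).exists
  refine ⟨fun x => gx x * π (ix x) * (gx x)⁻¹, fun i g hg => ?_⟩
  have hix : ix (g (α i)) = i := (hα _).unique ⟨_, hgxG _, hgxα _⟩ ⟨g, hg, rfl⟩
  have hgx := hgxα (g (α i))
  rw [hix] at hgx
  dsimp only
  rw [hix]
  exact conj_eq_conj_of_apply_eq (hcent i) (hgxG _) hg hgx

variable {f : X → Perm X}

theorem map_mem_of_apply_eq_conj (hcover : ∀ x : X, ∃ i : I, ∃ g ∈ G, g (α i) = x)
    (hf : ∀ i : I, ∀ g ∈ G, f (g (α i)) = g * π i * g⁻¹) (hπG : ∀ i : I, π i ∈ G) (y : X) :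
    f y ∈ G := by
  obtain ⟨i, g, hg, rfl⟩ := hcover y
  rw [hf i g hg]
  exact mul_mem (mul_mem hg (hπG i)) (inv_mem hg)

theorem map_apply_eq_conj_of_mem (hcover : ∀ x : X, ∃ i : I, ∃ g ∈ G, g (α i) = x)
    (hf : ∀ i : I, ∀ g ∈ G, f (g (α i)) = g * π i * g⁻¹) {σ : Perm X} (hσ : σ ∈ G) (y : X) :
    f (σ y) = σ * f y * σ⁻¹ := by
  obtain ⟨i, g, hg, rfl⟩ := hcover y
  rw [← Perm.mul_apply, hf i _ (mul_mem hσ hg), hf i g hg]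
  group

end

/-- Given `G ≤ Equiv.Perm X`, a complete set of orbit representatives `α i`, and elements
`π i ∈ G` with `G_{α i} ≤ C_G(π i)`, there is a well-defined map `f` with
`f(α_i · g) = g⁻¹ π_i g` (in Mathlib's left-application convention,
`f (g (α i)) = g * π i * g⁻¹`), and `x ▷ y := (f y) x` is a rack whose operator group is
contained in `G`. -/
theorem rack_construction {X : Type*} {I : Type*} (G : Subgroup (Equiv.Perm X))
    (α : I → X) (hα : ∀ x : X, ∃! i : I, ∃ g ∈ G, g (α i) = x)
    (π : I → Equiv.Perm X) (hπG : ∀ i : I, π i ∈ G)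
    (hcent : ∀ i : I, ∀ g ∈ G, g (α i) = α i → g * π i = π i * g) :
    ∃ f : X → Equiv.Perm X,
      (∀ i : I, ∀ g ∈ G, f (g (α i)) = g * π i * g⁻¹) ∧
      IsRack (fun x y : X => f y x) ∧
      OpGroup (fun x y : X => f y x) ≤ G := by
  obtain ⟨f, hf⟩ := exists_map_apply_eq_conj hα hcent
  have hcover : ∀ x : X, ∃ i : I, ∃ g ∈ G, g (α i) = x := fun x => (hα x).exists
  have hfG : ∀ y, f y ∈ G := map_mem_of_apply_eq_conj hcover hf hπG
  exact ⟨f, hf, isRack_of_map_conj f fun y z => map_apply_eq_conj_of_mem hcover hf (hfG z) y,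
    opGroup_le_of_forall_mem f hfG⟩
end

section
/- In the rack construction from a subgroup G ≤ Equiv.Perm X, orbit representatives {α_i : i ∈ I} and elements π_i ∈ G with G_{α_i} ≤ C_G(π_i) (where x ▷ y is defined via f(α_i · g) = g⁻¹ π_i g): if additionally G is generated by the set of all conjugates {g⁻¹ π_i g : g ∈ G, i ∈ I}, then the operator group of the resulting rack (X, ▷) is equal to G. -/
/-- In the rack construction from `G`, orbit representatives `α i` and elements `π i`
(with `f` the map determined by `f(α_i · g) = g⁻¹ π_i g`, i.e. in Mathlib's
left-application convention `f (g (α i)) = g * π i * g⁻¹`): if moreover `G` is generated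
by all the conjugates of the `π i`, then the operator group of the rack
`x ▷ y := (f y) x` equals `G`. -/
theorem rack_construction_opgroup_eq {X : Type*} {I : Type*} (G : Subgroup (Equiv.Perm X))
    (α : I → X) (hα : ∀ x : X, ∃! i : I, ∃ g ∈ G, g (α i) = x)
    (π : I → Equiv.Perm X) (hπG : ∀ i : I, π i ∈ G)
    (hcent : ∀ i : I, ∀ g ∈ G, g (α i) = α i → g * π i = π i * g)
    (f : X → Equiv.Perm X) (hf : ∀ i : I, ∀ g ∈ G, f (g (α i)) = g * π i * g⁻¹)
    (hgen : Subgroup.closure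
        {σ : Equiv.Perm X | ∃ i : I, ∃ g ∈ G, σ = g * π i * g⁻¹} = G) :
    OpGroup (fun x y : X => f y x) = G := by
  have hset : {σ : Equiv.Perm X | ∃ y : X, ∀ x : X, σ x = f y x}
      = {σ : Equiv.Perm X | ∃ i : I, ∃ g ∈ G, σ = g * π i * g⁻¹} := by
    ext σ
    constructor
    · rintro ⟨y, hy⟩
      obtain ⟨i, ⟨g, hg, hgi⟩, -⟩ := hα y
      exact ⟨i, g, hg, by ext x; rw [hy, ← hgi, hf i g hg]⟩
    · rintro ⟨i, g, hg, rfl⟩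
      exact ⟨g (α i), fun x => by rw [hf i g hg]⟩
  rw [OpGroup, hset, hgen]
end

section
/- In the rack construction from a subgroup G ≤ Equiv.Perm X, orbit representatives {α_i : i ∈ I} and elements π_i ∈ G with G_{α_i} ≤ C_G(π_i): if additionally π_i fixes α_i for every i ∈ I (i.e. π_i ∈ G_{α_i}), then the resulting rack (X, ▷) is a quandle, that is, x ▷ x = x for all x ∈ X. If moreover each π_i has order dividing 2, then (X, ▷) is a kei, that is, (x ▷ y) ▷ y = x for all x, y ∈ X. -/
/-- A quandle is an idempotent rack. -/
def IsQuandle {X : Type*} (op : X → X → X) : Prop :=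
  IsRack op ∧ ∀ x : X, op x x = x

/-- A kei is a quandle whose right multiplications are involutions. -/
def IsKei {X : Type*} (op : X → X → X) : Prop :=
  IsQuandle op ∧ ∀ x y : X, op (op x y) y = x

/-!
Every `f x` is a `G`-conjugate `g π_i g⁻¹` of some `π_i`, so `f x ∈ G` and `f` is
`G`-equivariant for conjugation: `f (h x) = h (f x) h⁻¹`. Applied with `h = f y` this is
self-distributivity. Idempotence and the involution law are conjugation-invariant
properties, so they transfer from `π_i` at `α_i` to `f x` at `x`.
-/

open Equiv

section ConjugationRack

variable {X : Type*} {f : X → Perm X}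

theorem isRack_of_conj (hconj : ∀ x y, f (f y x) = f y * f x * (f y)⁻¹) :
    IsRack fun x y => f y x := by
  refine ⟨fun y => (f y).bijective, fun x y z => ?_⟩
  change f z (f y x) = f (f z y) (f z x)
  rw [hconj y z, Perm.mul_apply, Perm.mul_apply, Perm.coe_inv, symm_apply_apply]

theorem isQuandle_of_conj (hconj : ∀ x y, f (f y x) = f y * f x * (f y)⁻¹)
    (hidem : ∀ x, f x x = x) : IsQuandle fun x y => f y x :=
  ⟨isRack_of_conj hconj, hidem⟩

theorem isKei_of_conj (hconj : ∀ x y, f (f y x) = f y * f x * (f y)⁻¹)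
    (hidem : ∀ x, f x x = x) (hsq : ∀ x, f x ^ 2 = 1) : IsKei fun x y => f y x := by
  refine ⟨isQuandle_of_conj hconj hidem, fun x y => ?_⟩
  change f y (f y x) = x
  rw [← Perm.mul_apply, ← sq, hsq, Perm.one_apply]

end ConjugationRack

namespace RackConstruction

variable {X I : Type*} {G : Subgroup (Perm X)} {α : I → X} {π : I → Perm X}
  {f : X → Perm X}

theorem exists_eq_conj (hα : ∀ x, ∃ i, ∃ g ∈ G, g (α i) = x)
    (hf : ∀ i, ∀ g ∈ G, f (g (α i)) = g * π i * g⁻¹) (x : X) :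
    ∃ i, ∃ g ∈ G, g (α i) = x ∧ f x = g * π i * g⁻¹ := by
  obtain ⟨i, g, hg, rfl⟩ := hα x
  exact ⟨i, g, hg, rfl, hf i g hg⟩

theorem mem_subgroup (hα : ∀ x, ∃ i, ∃ g ∈ G, g (α i) = x) (hπG : ∀ i, π i ∈ G)
    (hf : ∀ i, ∀ g ∈ G, f (g (α i)) = g * π i * g⁻¹) (x : X) : f x ∈ G := by
  obtain ⟨i, g, hg, -, hfx⟩ := exists_eq_conj hα hf x
  rw [hfx]
  exact mul_mem (mul_mem hg (hπG i)) (inv_mem hg)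

theorem conj_equivariant (hα : ∀ x, ∃ i, ∃ g ∈ G, g (α i) = x)
    (hf : ∀ i, ∀ g ∈ G, f (g (α i)) = g * π i * g⁻¹) {h : Perm X} (hh : h ∈ G) (x : X) :
    f (h x) = h * f x * h⁻¹ := by
  obtain ⟨i, g, hg, rfl, hfx⟩ := exists_eq_conj hα hf x
  rw [← Perm.mul_apply, hf i _ (mul_mem hh hg), hfx]
  group

theorem apply_self (hα : ∀ x, ∃ i, ∃ g ∈ G, g (α i) = x)
    (hf : ∀ i, ∀ g ∈ G, f (g (α i)) = g * π i * g⁻¹) (hfix : ∀ i, π i (α i) = α i) (x : X) :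
    f x x = x := by
  obtain ⟨i, g, -, rfl, hfx⟩ := exists_eq_conj hα hf x
  rw [hfx, Perm.mul_apply, Perm.mul_apply, Perm.coe_inv, symm_apply_apply, hfix]

theorem sq_eq_one (hα : ∀ x, ∃ i, ∃ g ∈ G, g (α i) = x)
    (hf : ∀ i, ∀ g ∈ G, f (g (α i)) = g * π i * g⁻¹) (hsq : ∀ i, π i ^ 2 = 1) (x : X) :
    f x ^ 2 = 1 := by
  obtain ⟨i, g, -, -, hfx⟩ := exists_eq_conj hα hf x
  rw [hfx, conj_pow, hsq, mul_one, mul_inv_cancel]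

end RackConstruction

open RackConstruction in
theorem rack_construction_quandle_kei_general {X : Type*} {I : Type*}
    (G : Subgroup (Equiv.Perm X))
    (α : I → X) (hα : ∀ x : X, ∃! i : I, ∃ g ∈ G, g (α i) = x)
    (π : I → Equiv.Perm X) (hπG : ∀ i : I, π i ∈ G)
    (f : X → Equiv.Perm X) (hf : ∀ i : I, ∀ g ∈ G, f (g (α i)) = g * π i * g⁻¹)
    (hfix : ∀ i : I, π i (α i) = α i) :
    IsQuandle (fun x y : X => f y x) ∧
    ((∀ i : I, π i ^ 2 = 1) → IsKei (fun x y : X => f y x)) := by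
  have hrep : ∀ x, ∃ i, ∃ g ∈ G, g (α i) = x := fun x => (hα x).exists
  have hconj : ∀ x y, f (f y x) = f y * f x * (f y)⁻¹ := fun x y =>
    conj_equivariant hrep hf (mem_subgroup hrep hπG hf y) x
  have hidem := apply_self hrep hf hfix
  exact ⟨isQuandle_of_conj hconj hidem,
    fun hsq => isKei_of_conj hconj hidem (sq_eq_one hrep hf hsq)⟩

/-- In the rack construction from `G`, orbit representatives `α i` and elements `π i`
(with `f` determined by `f(α_i · g) = g⁻¹ π_i g`, i.e. in Mathlib's left-application
convention `f (g (α i)) = g * π i * g⁻¹`, and `x ▷ y := (f y) x`): if each `π i` fixes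
`α i` then the rack is a quandle, and if moreover each `π i` has order dividing `2` then
it is a kei. -/
theorem rack_construction_quandle_kei {X : Type*} {I : Type*}
    (G : Subgroup (Equiv.Perm X))
    (α : I → X) (hα : ∀ x : X, ∃! i : I, ∃ g ∈ G, g (α i) = x)
    (π : I → Equiv.Perm X) (hπG : ∀ i : I, π i ∈ G)
    (hcent : ∀ i : I, ∀ g ∈ G, g (α i) = α i → g * π i = π i * g)
    (f : X → Equiv.Perm X) (hf : ∀ i : I, ∀ g ∈ G, f (g (α i)) = g * π i * g⁻¹)
    (hfix : ∀ i : I, π i (α i) = α i) :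
    IsQuandle (fun x y : X => f y x) ∧
    ((∀ i : I, π i ^ 2 = 1) → IsKei (fun x y : X => f y x)) :=
  rack_construction_quandle_kei_general G α hα π hπG f hf hfix
end

section
/- Every group G is isomorphic to the operator group of some quandle; that is, for every group G there exist a type X, a quandle operation ▷ on X, and a group isomorphism between G and the subgroup of Equiv.Perm X generated by the permutations x ↦ x ▷ y for y ∈ X. -/
/-- `G` permutes `G ⊕ G`: left multiplication on the left copy, conjugation on the right. -/
def myPerm {G : Type u} [Group G] (a : G) : Equiv.Perm (G ⊕ G) :=
  Equiv.sumCongr (Equiv.mulLeft a) (MulAut.conj a).toEquiv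

@[simp] lemma myPerm_inl {G : Type u} [Group G] (a b : G) :
    myPerm a (Sum.inl b) = Sum.inl (a * b) := rfl

@[simp] lemma myPerm_inr {G : Type u} [Group G] (a b : G) :
    myPerm a (Sum.inr b) = Sum.inr (a * b * a⁻¹) := rfl

/-- `myPerm` as a group homomorphism. -/
def myHom (G : Type u) [Group G] : G →* Equiv.Perm (G ⊕ G) where
  toFun := myPerm
  map_one' := by
    ext x
    rcases x with b | b <;> simp
  map_mul' a b := by
    ext x
    rcases x with c | c <;> simp [mul_assoc]

/-- The label of an element of `G ⊕ G`. -/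
def myLabel {G : Type u} [Group G] : G ⊕ G → G
  | Sum.inl _ => 1
  | Sum.inr a => a

/-- The quandle operation. -/
def myOp {G : Type u} [Group G] (x y : G ⊕ G) : G ⊕ G := myPerm (myLabel y) x

lemma myLabel_op {G : Type u} [Group G] (y z : G ⊕ G) :
    myLabel (myOp y z) = myLabel z * myLabel y * (myLabel z)⁻¹ := by
  rcases z with c | c <;> rcases y with b | b <;> simp [myOp, myLabel]

lemma myHom_injective (G : Type u) [Group G] : Function.Injective (myHom G) := by
  intro a b h
  have := congrArg (fun σ : Equiv.Perm (G ⊕ G) => σ (Sum.inl 1)) h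
  simpa [myHom] using this

/-- Every group is isomorphic to the operator group of some quandle. -/
theorem every_group_is_opgroup_of_quandle (G : Type u) [Group G] :
    ∃ (X : Type u) (op : X → X → X), IsQuandle op ∧ Nonempty (G ≃* OpGroup op) := by
  refine ⟨G ⊕ G, myOp, ⟨⟨fun y => (myPerm (myLabel y)).bijective, ?_⟩, ?_⟩, ?_⟩
  · -- self-distributivity
    intro x y z
    show myPerm (myLabel z) (myPerm (myLabel y) x)
        = myPerm (myLabel (myOp y z)) (myPerm (myLabel z) x)
    rw [myLabel_op]
    have h : myPerm (myLabel z * myLabel y)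
        = myPerm (myLabel z * myLabel y * (myLabel z)⁻¹) * myPerm (myLabel z) := by
      have := (myHom G).map_mul (myLabel z * myLabel y * (myLabel z)⁻¹) (myLabel z)
      simpa [myHom, inv_mul_cancel_right] using this
    have h2 := congrArg (fun σ : Equiv.Perm (G ⊕ G) => σ x) h
    have h3 : myPerm (myLabel z * myLabel y) x
        = myPerm (myLabel z) (myPerm (myLabel y) x) := by
      have := congrArg (fun σ : Equiv.Perm (G ⊕ G) => σ x)
        ((myHom G).map_mul (myLabel z) (myLabel y))
      simpa [myHom, Equiv.Perm.mul_apply] using this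
    simpa [Equiv.Perm.mul_apply, h3] using h2
  · -- idempotent
    intro x
    rcases x with b | b <;> simp [myOp, myLabel]
  · -- the isomorphism
    have hrange : (myHom G).range = OpGroup (myOp (G := G)) := by
      apply le_antisymm
      · rintro σ ⟨a, rfl⟩
        exact Subgroup.subset_closure ⟨Sum.inr a, fun x => rfl⟩
      · rw [OpGroup]
        apply (Subgroup.closure_le _).mpr
        rintro σ ⟨y, hy⟩
        refine ⟨myLabel y, ?_⟩
        ext x
        exact (hy x).symm
    exact ⟨(MonoidHom.ofInjective (myHom_injective G)).trans
      (MulEquiv.subgroupCongr hrange)⟩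
end

section
/- A group G is isomorphic to the operator group of some kei if and only if G is generated by its involutions, i.e. G equals the subgroup generated by its elements of order dividing 2. -/
/-!
The operators `x ↦ x ▷ y` of a kei are involutions, so an operator group is generated by
involutions, and this property passes along isomorphisms.

Conversely, let `G` act on `X` and let `φ : X → G` be equivariant for conjugation, with
`φ x` an involution fixing `x`. Then `x ▷ y := φ y • x` is a kei whose operator group is the
image of `⟨range φ⟩` in `Perm X` (Joyce's augmented quandles). Take for `X` the involutions
of `G` under conjugation, labelled by themselves, together with a copy of `G` under left
translation, labelled by `1`: the labels generate `G`, and the translations make the action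
faithful.
-/

open Subgroup

theorem closure_sq_eq_one_eq_top_of_mulEquiv {G H : Type*} [Group G] [Group H] (e : G ≃* H)
    (h : closure {x : H | x ^ 2 = 1} = ⊤) : closure {g : G | g ^ 2 = 1} = ⊤ := by
  rw [← map_top_of_surjective (e.symm : H →* G) e.symm.surjective, ← h, MonoidHom.map_closure]
  congr 1
  ext g
  simp [← map_pow, e.symm_apply_eq]

theorem closure_sq_eq_one_eq_top_opGroup {X : Type*} {op : X → X → X}
    (h : ∀ x y, op (op x y) y = x) : closure {σ : OpGroup op | σ ^ 2 = 1} = ⊤ := by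
  refine top_unique (closure_closure_coe_preimage.symm.le.trans (closure_mono ?_))
  rintro σ ⟨y, hy⟩
  refine Subtype.ext (Equiv.ext fun x => ?_)
  change σ.1 (σ.1 x) = x
  rw [hy, hy, h]

section Augmented

variable {G X : Type*} [Group G] (ρ : G →* Equiv.Perm X) (φ : X → G)

def augmentedOp (x y : X) : X := ρ (φ y) x

variable {ρ φ}

theorem isRack_augmentedOp (hφ : ∀ g x, φ (ρ g x) = g * φ x * g⁻¹) :
    IsRack (augmentedOp ρ φ) := by
  refine ⟨fun y => (ρ (φ y)).bijective, fun x y z => ?_⟩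
  simp only [augmentedOp, hφ, map_mul, map_inv, Equiv.Perm.mul_apply, Equiv.Perm.coe_inv,
    Equiv.symm_apply_apply]

theorem isKei_augmentedOp (hφ : ∀ g x, φ (ρ g x) = g * φ x * g⁻¹)
    (hfix : ∀ x, ρ (φ x) x = x) (hsq : ∀ x, φ x ^ 2 = 1) : IsKei (augmentedOp ρ φ) := by
  refine ⟨⟨isRack_augmentedOp hφ, hfix⟩, fun x y => ?_⟩
  rw [augmentedOp, augmentedOp, ← Equiv.Perm.mul_apply, ← map_mul, ← sq, hsq, map_one,
    Equiv.Perm.one_apply]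

theorem opGroup_augmentedOp : OpGroup (augmentedOp ρ φ) = (closure (Set.range φ)).map ρ := by
  rw [MonoidHom.map_closure, ← Set.range_comp, OpGroup]
  congr 1
  ext σ
  simp only [Set.mem_ofPred_eq, Set.mem_range, Function.comp_apply, augmentedOp,
    ← Equiv.ext_iff, eq_comm]

end Augmented

section Involutions

variable (G : Type*) [Group G]

def involutions : SubMulAction (ConjAct G) G where
  carrier := {t | t ^ 2 = 1}
  smul_mem' c t ht := by simp_all [ConjAct.smul_def, conj_pow]

abbrev InvolutionKei : Type _ := involutions G ⊕ G

def involutionKeiAction : G →* Equiv.Perm (InvolutionKei G) :=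
  (Equiv.Perm.sumCongrHom _ _).comp
    (((MulAction.toPermHom (ConjAct G) (involutions G)).comp ConjAct.toConjAct.toMonoidHom).prod
      (MulAction.toPermHom G G))

def involutionKeiLabel : InvolutionKei G → G := Sum.elim (↑) fun _ => 1

variable {G}

@[simp]
theorem involutionKeiAction_inl (g : G) (t : involutions G) :
    involutionKeiAction G g (.inl t) = .inl (ConjAct.toConjAct g • t) := rfl

@[simp]
theorem involutionKeiAction_inr (g b : G) :
    involutionKeiAction G g (.inr b) = .inr (g * b) := rfl

theorem involutionKeiAction_injective : Function.Injective (involutionKeiAction G) := by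
  intro g h hgh
  simpa using congr($hgh (.inr 1))

theorem sq_subset_range_involutionKeiLabel :
    {g : G | g ^ 2 = 1} ⊆ Set.range (involutionKeiLabel G) :=
  fun t ht => ⟨.inl ⟨t, ht⟩, rfl⟩

theorem isKei_involutionKei :
    IsKei (augmentedOp (involutionKeiAction G) (involutionKeiLabel G)) := by
  refine isKei_augmentedOp ?_ ?_ ?_
  · rintro g (t | b) <;> simp [involutionKeiLabel, ConjAct.toConjAct_smul]
  · rintro (t | b)
    · exact congr_arg Sum.inl (Subtype.ext (mul_inv_cancel_right _ _))
    · simp [involutionKeiLabel]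
  · rintro (⟨t, ht⟩ | b)
    exacts [ht, one_pow 2]

end Involutions

/-- A group is isomorphic to the operator group of some kei if and only if it is
generated by its elements of order dividing `2`. -/
theorem opgroup_of_kei_iff_generated_by_involutions (G : Type u) [Group G] :
    (∃ (X : Type u) (op : X → X → X), IsKei op ∧ Nonempty (G ≃* OpGroup op)) ↔
      Subgroup.closure {g : G | g ^ 2 = 1} = ⊤ := by
  constructor
  · rintro ⟨X, op, hop, ⟨e⟩⟩
    exact closure_sq_eq_one_eq_top_of_mulEquiv e (closure_sq_eq_one_eq_top_opGroup hop.2)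
  · intro htop
    refine ⟨_, _, isKei_involutionKei,
      ⟨(MonoidHom.ofInjective involutionKeiAction_injective).trans (MulEquiv.subgroupCongr ?_)⟩⟩
    have hgen : closure (Set.range (involutionKeiLabel G)) = ⊤ :=
      top_unique (htop ▸ closure_mono sq_subset_range_involutionKeiLabel)
    rw [opGroup_augmentedOp, hgen, MonoidHom.range_eq_map]
end

section
/- Let X be a set and let G ≤ Equiv.Perm X act transitively on X. If G is the operator group of some rack (X, ▷) on X, then there exists π ∈ G whose normal closure in G is equal to G. -/
/-!
Self-distributivity says exactly that conjugating the right multiplication `f_y` by a generator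
`f_z` gives `f_{y ▷ z}`; hence `g f_y g⁻¹ = f_{g y}` for every `g` in the operator group.
By transitivity every generator `f_y` is then a conjugate of a fixed `f_{x₀}`, so the normal
closure of `f_{x₀}` contains all generators.
-/

theorem Subgroup.closure_conjugates_eq_of_closure_eq {M : Type*} [Group M] {G : Subgroup M}
    {S : Set M} (hS : Subgroup.closure S = G) {π : M} (hπ : π ∈ G)
    (hconj : ∀ s ∈ S, ∃ g ∈ G, g * π * g⁻¹ = s) :
    Subgroup.closure {σ : M | ∃ g ∈ G, σ = g * π * g⁻¹} = G := by
  subst hS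
  refine le_antisymm (Subgroup.closure_le _ |>.2 ?_) (Subgroup.closure_mono ?_)
  · rintro _ ⟨g, hg, rfl⟩
    exact mul_mem (mul_mem hg hπ) (inv_mem hg)
  · intro s hs
    obtain ⟨g, hg, rfl⟩ := hconj s hs
    exact ⟨g, hg, rfl⟩

namespace IsRack

variable {X : Type*} {op : X → X → X}

noncomputable def rightPerm (hop : IsRack op) (y : X) : Equiv.Perm X :=
  Equiv.ofBijective _ (hop.1 y)

@[simp]
theorem rightPerm_apply (hop : IsRack op) (y x : X) : hop.rightPerm y x = op x y := rfl

theorem opGroup_eq_closure_range_rightPerm (hop : IsRack op) :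
    OpGroup op = Subgroup.closure (Set.range hop.rightPerm) := by
  rw [OpGroup]
  congr 1
  ext σ
  simp only [Set.mem_range, Equiv.ext_iff, rightPerm_apply, eq_comm]
  rfl

theorem rightPerm_mem_opGroup (hop : IsRack op) (y : X) : hop.rightPerm y ∈ OpGroup op :=
  hop.opGroup_eq_closure_range_rightPerm ▸ Subgroup.subset_closure ⟨y, rfl⟩

theorem rightPerm_conj_rightPerm (hop : IsRack op) (y z : X) :
    hop.rightPerm z * hop.rightPerm y * (hop.rightPerm z)⁻¹ = hop.rightPerm (op y z) := by
  rw [mul_inv_eq_iff_eq_mul]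
  ext x
  exact hop.2 x y z

theorem conj_rightPerm_of_mem_opGroup (hop : IsRack op) {g : Equiv.Perm X}
    (hg : g ∈ OpGroup op) (y : X) : g * hop.rightPerm y * g⁻¹ = hop.rightPerm (g y) := by
  replace hg : g ∈ Subgroup.closure (Set.range hop.rightPerm) :=
    hop.opGroup_eq_closure_range_rightPerm ▸ hg
  revert y
  induction hg using Subgroup.closure_induction with
  | mem _ hσ =>
    obtain ⟨z, rfl⟩ := hσ
    intro y
    exact hop.rightPerm_conj_rightPerm y z
  | one => simp
  | mul a b _ _ iha ihb =>
    intro y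
    calc a * b * hop.rightPerm y * (a * b)⁻¹ = a * (b * hop.rightPerm y * b⁻¹) * a⁻¹ := by group
      _ = hop.rightPerm ((a * b) y) := by rw [ihb, iha, Equiv.Perm.mul_apply]
  | inv a _ iha =>
    intro y
    calc a⁻¹ * hop.rightPerm y * a⁻¹⁻¹
        = a⁻¹ * (a * hop.rightPerm (a⁻¹ y) * a⁻¹) * a⁻¹⁻¹ := by
          rw [iha, ← Equiv.Perm.mul_apply, mul_inv_cancel, Equiv.Perm.one_apply]
      _ = hop.rightPerm (a⁻¹ y) := by group

end IsRack

/-- If a transitive group `G ≤ Equiv.Perm X` is the operator group of some rack on `X`,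
then some element `π ∈ G` has normal closure in `G` equal to `G`. -/
theorem transitive_opgroup_has_generating_normal_closure {X : Type*}
    (G : Subgroup (Equiv.Perm X)) (htrans : ∀ x y : X, ∃ g ∈ G, g x = y)
    (op : X → X → X) (hop : IsRack op) (hG : OpGroup op = G) :
    ∃ π ∈ G, Subgroup.closure {σ : Equiv.Perm X | ∃ g ∈ G, σ = g * π * g⁻¹} = G := by
  subst hG
  rcases isEmpty_or_nonempty X with _ | ⟨⟨x₀⟩⟩
  · exact ⟨1, one_mem _, Subsingleton.elim _ _⟩
  refine ⟨hop.rightPerm x₀, hop.rightPerm_mem_opGroup x₀,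
    Subgroup.closure_conjugates_eq_of_closure_eq hop.opGroup_eq_closure_range_rightPerm.symm
      (hop.rightPerm_mem_opGroup x₀) ?_⟩
  rintro _ ⟨y, rfl⟩
  obtain ⟨g, hg, rfl⟩ := htrans x₀ y
  exact ⟨g, hg, hop.conj_rightPerm_of_mem_opGroup hg x₀⟩
end

section
/- Let X be a set and let G ≤ Equiv.Perm X be an abelian subgroup acting transitively on X. If G is not cyclic, then G is not the operator group of any rack on X; that is, there is no rack operation ▷ on X whose operator group equals G. -/
/-!
Write `R_y` for the right multiplication `x ↦ x ▷ y`. Self-distributivity says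
`R_z ∘ R_y = R_{y ▷ z} ∘ R_z`; if `R_y` and `R_z` commute, cancelling the surjective `R_z`
gives `R_{y ▷ z} = R_y`. Hence in a rack with abelian operator group `G`, the map `y ↦ R_y` is
constant on `G`-orbits, so it is constant when `G` acts transitively. Then `G` is generated by at
most one permutation and is cyclic.
-/

theorem isCyclic_closure_of_subsingleton {G : Type*} [Group G] {S : Set G} (hS : S.Subsingleton) :
    IsCyclic (Subgroup.closure S) := by
  rcases hS.eq_empty_or_singleton with rfl | ⟨g, rfl⟩
  · rw [Subgroup.closure_empty]
    infer_instance
  · rw [← Subgroup.zpowers_eq_closure]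
    infer_instance

namespace OpGroup

variable {X : Type*} {op : X → X → X}

theorem mem_of_forall_apply_eq {σ : Equiv.Perm X} {y : X} (hσ : ∀ x, σ x = op x y) :
    σ ∈ OpGroup op :=
  Subgroup.subset_closure ⟨y, hσ⟩

theorem op_op_right_eq_of_commute
    (hdist : ∀ x y z : X, op (op x y) z = op (op x z) (op y z))
    {σ τ : Equiv.Perm X} {y z : X} (hσ : ∀ x, σ x = op x y) (hτ : ∀ x, τ x = op x z)
    (hστ : σ * τ = τ * σ) (w : X) :
    op w (op y z) = op w y := by
  obtain ⟨x, rfl⟩ := τ.surjective w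
  calc op (τ x) (op y z) = op (op x z) (op y z) := by rw [hτ]
    _ = τ (σ x) := by rw [← hdist, hτ, hσ]
    _ = σ (τ x) := by rw [← Equiv.Perm.mul_apply, ← hστ, Equiv.Perm.mul_apply]
    _ = op (τ x) y := hσ _

theorem op_apply_eq_of_mem (hrack : IsRack op)
    (hab : ∀ a ∈ OpGroup op, ∀ b ∈ OpGroup op, a * b = b * a)
    {g : Equiv.Perm X} (hg : g ∈ OpGroup op) (w y : X) :
    op w (g y) = op w y := by
  induction hg using Subgroup.closure_induction generalizing y with
  | mem τ hτ =>
    obtain ⟨z, hτ⟩ := hτ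
    let σ := Equiv.ofBijective _ (hrack.1 y)
    have hσ : ∀ x, σ x = op x y := fun _ => rfl
    rw [hτ]
    exact op_op_right_eq_of_commute hrack.2 hσ hτ
      (hab _ (mem_of_forall_apply_eq hσ) _ (mem_of_forall_apply_eq hτ)) w
  | one => rfl
  | mul a b _ _ ha hb => rw [Equiv.Perm.mul_apply, ha, hb]
  | inv a _ ha => rw [← ha, Equiv.Perm.coe_inv, Equiv.apply_symm_apply]

theorem isCyclic_of_forall_op_eq (hconst : ∀ w y y' : X, op w y = op w y') :
    IsCyclic (OpGroup op) := by
  refine isCyclic_closure_of_subsingleton ?_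
  rintro σ ⟨y, hσ⟩ τ ⟨y', hτ⟩
  ext x
  rw [hσ, hτ, hconst]

end OpGroup

/-- A non-cyclic abelian transitive subgroup of `Equiv.Perm X` is not the operator group
of any rack on `X`. -/
theorem abelian_transitive_noncyclic_not_opgroup {X : Type*}
    (G : Subgroup (Equiv.Perm X))
    (hab : ∀ a ∈ G, ∀ b ∈ G, a * b = b * a)
    (htrans : ∀ x y : X, ∃ g ∈ G, g x = y)
    (hnc : ¬ IsCyclic G) :
    ¬ ∃ op : X → X → X, IsRack op ∧ OpGroup op = G := by
  rintro ⟨op, hrack, rfl⟩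
  refine hnc (OpGroup.isCyclic_of_forall_op_eq fun w y y' => ?_)
  obtain ⟨g, hg, rfl⟩ := htrans y y'
  exact (OpGroup.op_apply_eq_of_mem hrack hab hg w y).symm
end

section
/- For every ε > 0 there exists N such that for all integers n ≥ N, the number of isomorphism classes of kei of order n is at least 2^((1/4 − ε) n²). (Equivalently, the number of isomorphism classes of kei of order n is at least 2^(n²/4 − O(n log n)).) -/
/-- Rack isomorphism of two binary operations on the same set. -/
def RackIso {X : Type*} (op op' : X → X → X) : Prop :=
  ∃ θ : Equiv.Perm X, ∀ x y : X, θ (op x y) = op' (θ x) (θ y)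

/-- The number of isomorphism classes of kei of order `n`. -/
noncomputable def numKei (n : ℕ) : ℕ :=
  Nat.card (Quot fun op op' : {op : Fin n → Fin n → Fin n // IsKei op} =>
    RackIso op.1 op'.1)

namespace KeiAux

/-- partner on ℕ : flip last bit -/
def pf (m : ℕ) : ℕ := if m % 2 = 0 then m + 1 else m - 1

lemma pf_pf (m : ℕ) : pf (pf m) = m := by unfold pf; split <;> split <;> omega
lemma pf_div2 (m : ℕ) : pf m / 2 = m / 2 := by unfold pf; split <;> omega

def flipF (n : ℕ) (x : Fin n) : Fin n :=
  if h : pf (x : ℕ) < n then ⟨pf x, h⟩ else x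

lemma flipF_div2 {n : ℕ} (x : Fin n) : ((flipF n x : Fin n) : ℕ) / 2 = (x : ℕ) / 2 := by
  unfold flipF; split
  · exact pf_div2 x
  · rfl

lemma flipF_flipF {n : ℕ} (x : Fin n) : flipF n (flipF n x) = x := by
  unfold flipF
  split
  · next h =>
    simp only [pf_pf]
    simp [x.isLt]
  · next h => simp [h]

def keiOp (n : ℕ) (f : ℕ → ℕ → Bool) (x y : Fin n) : Fin n :=
  if (x : ℕ) / 2 ≠ (y : ℕ) / 2 ∧ f ((y : ℕ) / 2) ((x : ℕ) / 2) = true then flipF n x else x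

lemma keiOp_def {n : ℕ} (f : ℕ → ℕ → Bool) (x y : Fin n) :
    keiOp n f x y =
      if (x : ℕ) / 2 ≠ (y : ℕ) / 2 ∧ f ((y : ℕ) / 2) ((x : ℕ) / 2) = true then flipF n x else x :=
  rfl

lemma keiOp_div2 {n : ℕ} (f : ℕ → ℕ → Bool) (x y : Fin n) :
    ((keiOp n f x y : Fin n) : ℕ) / 2 = (x : ℕ) / 2 := by
  unfold keiOp; split
  · exact flipF_div2 x
  · rfl

lemma keiOp_inv {n : ℕ} (f : ℕ → ℕ → Bool) (x y : Fin n) :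
    keiOp n f (keiOp n f x y) y = x := by
  have hb := keiOp_div2 f x y
  rw [keiOp_def f (keiOp n f x y) y, hb]
  by_cases hc : (x : ℕ) / 2 ≠ (y : ℕ) / 2 ∧ f ((y : ℕ) / 2) ((x : ℕ) / 2) = true
  · rw [if_pos hc, keiOp_def, if_pos hc, flipF_flipF]
  · rw [if_neg hc, keiOp_def, if_neg hc]

lemma keiOp_idem {n : ℕ} (f : ℕ → ℕ → Bool) (x : Fin n) : keiOp n f x x = x := by
  simp [keiOp]

lemma keiOp_distrib {n : ℕ} (f : ℕ → ℕ → Bool) (x y z : Fin n) :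
    keiOp n f (keiOp n f x y) z = keiOp n f (keiOp n f x z) (keiOp n f y z) := by
  have hxy := keiOp_div2 f x y
  have hxz := keiOp_div2 f x z
  have hyz := keiOp_div2 f y z
  rw [keiOp_def f (keiOp n f x y) z, hxy, keiOp_def f (keiOp n f x z) (keiOp n f y z), hxz, hyz]
  by_cases hA : (x : ℕ) / 2 ≠ (y : ℕ) / 2 ∧ f ((y : ℕ) / 2) ((x : ℕ) / 2) = true
  · by_cases hB : (x : ℕ) / 2 ≠ (z : ℕ) / 2 ∧ f ((z : ℕ) / 2) ((x : ℕ) / 2) = true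
    · rw [if_pos hA, if_pos hB, keiOp_def, if_pos hA, keiOp_def, if_pos hB]
    · rw [if_pos hA, if_neg hB, keiOp_def, if_pos hA, keiOp_def, if_neg hB]
  · by_cases hB : (x : ℕ) / 2 ≠ (z : ℕ) / 2 ∧ f ((z : ℕ) / 2) ((x : ℕ) / 2) = true
    · rw [if_neg hA, if_pos hB, keiOp_def, if_neg hA, keiOp_def, if_pos hB]
    · rw [if_neg hA, if_neg hB, keiOp_def, if_neg hA, keiOp_def, if_neg hB]

lemma isKei_keiOp (n : ℕ) (f : ℕ → ℕ → Bool) : IsKei (keiOp n f) :=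
  ⟨⟨⟨fun y => Function.Involutive.bijective (fun x => keiOp_inv f x y),
     keiOp_distrib f⟩, keiOp_idem f⟩, keiOp_inv f⟩


/-- index type for off-diagonal pairs -/
def D (k : ℕ) := {p : Fin k × Fin k // p.1 ≠ p.2}

instance (k : ℕ) : Fintype (D k) := by unfold D; infer_instance
instance (k : ℕ) : DecidableEq (D k) := by unfold D; infer_instance

lemma card_D (k : ℕ) : Fintype.card (D k) = k * k - k := by
  have e : {p : Fin k × Fin k // p.1 = p.2} ≃ Fin k :=
    ⟨fun p => p.1.1, fun i => ⟨(i, i), rfl⟩,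
     fun p => by obtain ⟨⟨a, b⟩, hab⟩ := p; cases hab; rfl, fun i => rfl⟩
  have : Fintype.card (D k) = Fintype.card (Fin k × Fin k) -
      Fintype.card {p : Fin k × Fin k // p.1 = p.2} :=
    Fintype.card_subtype_compl _
  rw [this, Fintype.card_congr e]
  simp [Fintype.card_prod]

def extF (n : ℕ) (d : D (n / 2) → Bool) : ℕ → ℕ → Bool := fun i j =>
  if h : i < n / 2 ∧ j < n / 2 ∧ i ≠ j
  then d ⟨(⟨i, h.1⟩, ⟨j, h.2.1⟩), Fin.ne_of_val_ne h.2.2⟩ else false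

lemma flipF_val_even {n : ℕ} (x : Fin n) (h0 : (x : ℕ) % 2 = 0) (h1 : (x : ℕ) + 1 < n) :
    flipF n x = ⟨(x : ℕ) + 1, h1⟩ := by
  unfold flipF pf
  rw [if_pos h0]
  rw [dif_pos h1]

lemma injective_keiOp_extF (n : ℕ) :
    Function.Injective (fun d : D (n / 2) → Bool => keiOp n (extF n d)) := by
  intro d d' h
  funext p
  obtain ⟨⟨i, j⟩, hij⟩ := p
  have hj2 : 2 * (j : ℕ) + 1 < n := by have := j.isLt; omega
  have hj1 : 2 * (j : ℕ) < n := by omega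
  have hi2 : 2 * (i : ℕ) < n := by have := i.isLt; omega
  have he := congrFun (congrFun h ⟨2 * (j : ℕ), hj1⟩) ⟨2 * (i : ℕ), hi2⟩
  simp only at he
  have hvij : (i : ℕ) ≠ (j : ℕ) := fun hv => hij (Fin.ext hv)
  have hji : ¬ ((2 * (j : ℕ)) / 2 = (2 * (i : ℕ)) / 2) := by omega
  have hd2 : (2 * (j : ℕ)) / 2 = (j : ℕ) := by omega
  have hd1 : (2 * (i : ℕ)) / 2 = (i : ℕ) := by omega
  have hext : ∀ d0 : D (n / 2) → Bool,
      extF n d0 ((2 * (i : ℕ)) / 2) ((2 * (j : ℕ)) / 2) = d0 ⟨(i, j), hij⟩ := by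
    intro d0
    rw [hd1, hd2, extF]
    rw [dif_pos ⟨i.isLt, j.isLt, hvij⟩]
  have hmod : (2 * (j : ℕ)) % 2 = 0 := by omega
  have key : ∀ d0 : D (n / 2) → Bool,
      ((keiOp n (extF n d0) ⟨2 * (j : ℕ), hj1⟩ ⟨2 * (i : ℕ), hi2⟩ : Fin n) : ℕ) =
        if d0 ⟨(i, j), hij⟩ then 2 * (j : ℕ) + 1 else 2 * (j : ℕ) := by
    intro d0
    rw [keiOp_def, hext d0]
    cases hd : d0 ⟨(i, j), hij⟩
    · simp [hd]
    · rw [if_pos ⟨hji, rfl⟩, flipF_val_even _ hmod hj2, if_pos rfl]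
  have he2 := congrArg Fin.val he
  rw [key d, key d'] at he2
  cases hd : d ⟨(i, j), hij⟩ <;> cases hd' : d' ⟨(i, j), hij⟩ <;>
    simp [hd, hd'] at he2 ⊢ <;> omega

lemma rackIso_refl {X : Type*} (op : X → X → X) : RackIso op op :=
  ⟨Equiv.refl _, fun _ _ => rfl⟩

lemma rackIso_symm {X : Type*} {op op' : X → X → X} (h : RackIso op op') : RackIso op' op := by
  obtain ⟨θ, hθ⟩ := h
  refine ⟨θ.symm, fun x y => ?_⟩
  have := hθ (θ.symm x) (θ.symm y)
  simp only [Equiv.apply_symm_apply] at this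
  rw [← this, Equiv.symm_apply_apply]

lemma rackIso_trans {X : Type*} {op op' op'' : X → X → X}
    (h : RackIso op op') (h' : RackIso op' op'') : RackIso op op'' := by
  obtain ⟨θ, hθ⟩ := h
  obtain ⟨τ, hτ⟩ := h'
  exact ⟨θ.trans τ, fun x y => by simp [Equiv.trans_apply, hθ, hτ]⟩

abbrev keiRel (n : ℕ) : {op : Fin n → Fin n → Fin n // IsKei op} →
    {op : Fin n → Fin n → Fin n // IsKei op} → Prop :=
  fun op op' => RackIso op.1 op'.1

lemma keiRel_equiv (n : ℕ) : Equivalence (keiRel n) :=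
  ⟨fun a => rackIso_refl a.1, rackIso_symm, rackIso_trans⟩

lemma card_bound (n : ℕ) :
    2 ^ (n / 2 * (n / 2) - n / 2) ≤ numKei n * n.factorial := by
  classical
  set k := n / 2 with hk
  let K := {op : Fin n → Fin n → Fin n // IsKei op}
  let Q := Quot (keiRel n)
  have hΨ : ∀ d : D k → Bool, IsKei (keiOp n (extF n d)) := fun d => isKei_keiOp n _
  let e : (D k → Bool) → K := fun d => ⟨keiOp n (extF n d), hΨ d⟩
  have he : Function.Injective e := by
    intro d d' h
    exact injective_keiOp_extF n (congrArg Subtype.val h)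
  have spec : ∀ d : D k → Bool, ∃ θ : Equiv.Perm (Fin n),
      ∀ x y, θ ((e d).1 x y) = ((Quot.mk (keiRel n) (e d)).out).1 (θ x) (θ y) := by
    intro d
    have h1 : Quot.mk (keiRel n) ((Quot.mk (keiRel n) (e d)).out) = Quot.mk (keiRel n) (e d) :=
      Quot.out_eq _
    have h2 : keiRel n (e d) ((Quot.mk (keiRel n) (e d)).out) :=
      ((keiRel_equiv n).eqvGen_iff).mp (Quot.eq.mp h1.symm)
    exact h2
  let Φ : (D k → Bool) → Q × Equiv.Perm (Fin n) :=
    fun d => (Quot.mk (keiRel n) (e d), Classical.choose (spec d))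
  have hΦ : Function.Injective Φ := by
    intro d d' h
    have hq : Quot.mk (keiRel n) (e d) = Quot.mk (keiRel n) (e d') := congrArg Prod.fst h
    have hθ : Classical.choose (spec d) = Classical.choose (spec d') := congrArg Prod.snd h
    apply he
    have s1 := Classical.choose_spec (spec d)
    have s2 := Classical.choose_spec (spec d')
    apply Subtype.ext
    funext x y
    have e1 := s1 x y
    have e2 := s2 x y
    rw [hθ, hq] at e1
    have : Classical.choose (spec d') ((e d).1 x y) = Classical.choose (spec d') ((e d').1 x y) :=
      e1.trans e2.symm
    exact (Classical.choose (spec d')).injective this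
  have hcard : Nat.card (D k → Bool) ≤ Nat.card (Q × Equiv.Perm (Fin n)) :=
    Nat.card_le_card_of_injective Φ hΦ
  have h1 : Nat.card (D k → Bool) = 2 ^ (k * k - k) := by
    rw [Nat.card_eq_fintype_card, Fintype.card_fun, card_D, Fintype.card_bool]
  have h2 : Nat.card (Q × Equiv.Perm (Fin n)) = numKei n * n.factorial := by
    rw [Nat.card_prod]
    have hp : Nat.card (Equiv.Perm (Fin n)) = n.factorial := by
      rw [Nat.card_eq_fintype_card, Fintype.card_perm, Fintype.card_fin]
    rw [hp]
    rfl
  rw [h1, h2] at hcard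
  exact hcard

end KeiAux

/-- The number of isomorphism classes of kei of order `n` is at least
`2 ^ ((1/4 - ε) n²)` for all sufficiently large `n`. -/
theorem kei_lower_bound (ε : ℝ) (hε : 0 < ε) :
    ∃ N : ℕ, ∀ n : ℕ, N ≤ n →
      (2 : ℝ) ^ ((1 / 4 - ε) * (n : ℝ) ^ 2) ≤ (numKei n : ℝ) := by
  have hc : 0 < ε / 2 * Real.log 2 := by positivity
  have hlog := (Real.isLittleO_log_id_atTop.bound hc)
  rw [Filter.eventually_atTop] at hlog
  obtain ⟨x0, hx0⟩ := hlog
  refine ⟨⌈x0⌉₊ + ⌈2 / ε⌉₊ + 3, fun n hn => ?_⟩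
  have hn3 : 3 ≤ n := by omega
  have hnx0 : x0 ≤ (n : ℝ) := by
    calc x0 ≤ (⌈x0⌉₊ : ℝ) := Nat.le_ceil x0
    _ ≤ (n : ℝ) := by exact_mod_cast le_trans (by omega) hn
  have hεn : 2 ≤ ε * n := by
    have h1 : (2 : ℝ) / ε ≤ (⌈2 / ε⌉₊ : ℝ) := Nat.le_ceil _
    have h2 : ((⌈2 / ε⌉₊ : ℕ) : ℝ) ≤ (n : ℝ) := by exact_mod_cast le_trans (by omega) hn
    have := le_trans h1 h2
    rw [div_le_iff₀ hε] at this
    linarith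
  set k := n / 2 with hk
  have hkk : k ≤ k * k := Nat.le_mul_of_pos_left k (by omega)
  have h2k : 2 * k ≤ n := by omega
  have h2k1 : n ≤ 2 * k + 1 := by omega
  -- real versions
  have h2kR : 2 * (k : ℝ) ≤ (n : ℝ) := by exact_mod_cast h2k
  have h2k1R : (n : ℝ) ≤ 2 * (k : ℝ) + 1 := by exact_mod_cast h2k1
  have hn3R : (3 : ℝ) ≤ (n : ℝ) := by exact_mod_cast hn3
  -- step 1: factorial bound
  have hfact : (n.factorial : ℝ) ≤ (2 : ℝ) ^ (ε / 2 * (n : ℝ) ^ 2) := by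
    have f1 : (n.factorial : ℝ) ≤ ((n : ℝ)) ^ (n : ℕ) := by
      exact_mod_cast Nat.factorial_le_pow n
    have hnpos : (0 : ℝ) < n := by linarith
    have f2 : ((n : ℝ)) ^ (n : ℕ) = Real.exp ((n : ℝ) * Real.log n) := by
      rw [← Real.rpow_natCast (n : ℝ) n, Real.rpow_def_of_pos hnpos, mul_comm]
    have f3 : (2 : ℝ) ^ (ε / 2 * (n : ℝ) ^ 2) =
        Real.exp (ε / 2 * (n : ℝ) ^ 2 * Real.log 2) := by
      rw [Real.rpow_def_of_pos (by norm_num : (0:ℝ) < 2), mul_comm]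
    refine f1.trans ?_
    rw [f2, f3]
    apply Real.exp_le_exp.mpr
    have hb := hx0 (n : ℝ) hnx0
    rw [Real.norm_eq_abs, Real.norm_eq_abs, id_eq] at hb
    have hlogn : Real.log n ≤ ε / 2 * Real.log 2 * n := by
      calc Real.log n ≤ |Real.log n| := le_abs_self _
      _ ≤ ε / 2 * Real.log 2 * |(n : ℝ)| := hb
      _ = ε / 2 * Real.log 2 * n := by rw [abs_of_pos hnpos]
    nlinarith [Real.log_pos (by norm_num : (1:ℝ) < 2)]
  -- step 2: exponent comparison
  have hcast : ((2 ^ (k * k - k) : ℕ) : ℝ) = (2 : ℝ) ^ (((k * k - k : ℕ)) : ℝ) := by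
    push_cast
    rw [Real.rpow_natCast]
  have hexp : (1 / 4 - ε) * (n : ℝ) ^ 2 + ε / 2 * (n : ℝ) ^ 2 ≤ ((k * k - k : ℕ) : ℝ) := by
    have : ((k * k - k : ℕ) : ℝ) = (k : ℝ) * k - k := by
      rw [Nat.cast_sub hkk]; push_cast; ring
    rw [this]
    nlinarith [sq_nonneg ((n : ℝ) - 2 * k), hε.le]
  -- step 3: assemble
  have hmain : (2 : ℝ) ^ ((1 / 4 - ε) * (n : ℝ) ^ 2) * (n.factorial : ℝ) ≤
      ((numKei n : ℕ) : ℝ) * (n.factorial : ℝ) := by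
    calc (2 : ℝ) ^ ((1 / 4 - ε) * (n : ℝ) ^ 2) * (n.factorial : ℝ)
        ≤ (2 : ℝ) ^ ((1 / 4 - ε) * (n : ℝ) ^ 2) * (2 : ℝ) ^ (ε / 2 * (n : ℝ) ^ 2) := by
          apply mul_le_mul_of_nonneg_left hfact (Real.rpow_nonneg (by norm_num) _)
      _ = (2 : ℝ) ^ ((1 / 4 - ε) * (n : ℝ) ^ 2 + ε / 2 * (n : ℝ) ^ 2) := by
          rw [← Real.rpow_add (by norm_num : (0:ℝ) < 2)]
      _ ≤ (2 : ℝ) ^ (((k * k - k : ℕ)) : ℝ) := by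
          apply Real.rpow_le_rpow_of_exponent_le (by norm_num) hexp
      _ = ((2 ^ (k * k - k) : ℕ) : ℝ) := hcast.symm
      _ ≤ ((numKei n : ℕ) : ℝ) * (n.factorial : ℝ) := by
          exact_mod_cast KeiAux.card_bound n
  have hfpos : (0 : ℝ) < (n.factorial : ℝ) := by exact_mod_cast n.factorial_pos
  exact le_of_mul_le_mul_right hmain hfpos
end

section
/- Let n be a positive integer and k = ⌊n/2⌋. Then the number of distinct kei operations ▷ on Fin n (as binary operations, not up to isomorphism) is at least 2^(k(k−1)). -/
/-- partner within a pair -/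
def KPt (x : ℕ) : ℕ := 2 * (x / 2) + (1 - x % 2)

lemma KPt_div2 (x : ℕ) : KPt x / 2 = x / 2 := by unfold KPt; omega
lemma KPt_KPt (x : ℕ) : KPt (KPt x) = x := by unfold KPt; omega
lemma KPt_ne (x : ℕ) : KPt x ≠ x := by unfold KPt; omega

lemma KIf_div2 (c : Prop) [Decidable c] (x : ℕ) : (if c then KPt x else x) / 2 = x / 2 := by
  split
  · exact KPt_div2 x
  · rfl

/-- flip condition -/
def KC (n : ℕ) (ε : ℕ → ℕ → Bool) (i j : ℕ) : Prop :=
  i ≠ j ∧ i < n / 2 ∧ j < n / 2 ∧ ε i j = true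

instance (n ε i j) : Decidable (KC n ε i j) := by unfold KC; infer_instance

def keiOp (n : ℕ) (ε : ℕ → ℕ → Bool) (x y : Fin n) : Fin n :=
  if h : KC n ε (x.val / 2) (y.val / 2) then
    ⟨KPt x.val, by have h2 := h.2.1; unfold KPt at *; omega⟩
  else x

lemma keiOp_val (n ε) (x y : Fin n) :
    (keiOp n ε x y).val = if KC n ε (x.val / 2) (y.val / 2) then KPt x.val else x.val := by
  unfold keiOp; split <;> rfl

lemma keiOp_div2 (n ε) (x y : Fin n) : (keiOp n ε x y).val / 2 = x.val / 2 := by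
  rw [keiOp_val]; split
  · exact KPt_div2 _
  · rfl

lemma keiOp_invol (n ε) (x y : Fin n) : keiOp n ε (keiOp n ε x y) y = x := by
  apply Fin.ext
  rw [keiOp_val, keiOp_div2, keiOp_val]
  by_cases h : KC n ε (x.val / 2) (y.val / 2) <;> simp [h, KPt_KPt]

lemma keiOp_idem (n ε) (x : Fin n) : keiOp n ε x x = x := by
  apply Fin.ext
  rw [keiOp_val]
  have : ¬ KC n ε (x.val / 2) (x.val / 2) := fun h => h.1 rfl
  simp [this]

lemma keiOp_distrib (n ε) (x y z : Fin n) :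
    keiOp n ε (keiOp n ε x y) z = keiOp n ε (keiOp n ε x z) (keiOp n ε y z) := by
  apply Fin.ext
  simp only [keiOp_val, KIf_div2]
  by_cases h1 : KC n ε (x.val / 2) (y.val / 2) <;>
    by_cases h2 : KC n ε (x.val / 2) (z.val / 2) <;>
      simp [h1, h2, KPt_div2, KPt_KPt]

lemma keiOp_isKei (n ε) : IsKei (keiOp n ε) :=
  ⟨⟨⟨fun y => Function.Involutive.bijective (fun x => keiOp_invol n ε x y),
     keiOp_distrib n ε⟩, keiOp_idem n ε⟩, keiOp_invol n ε⟩

/-- extended parameter from off-diagonal data -/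
def KExt (k : ℕ) (g : {p : Fin k × Fin k // p.1 ≠ p.2} → Bool) : ℕ → ℕ → Bool :=
  fun i j => if h : i < k ∧ j < k ∧ i ≠ j then
    g ⟨(⟨i, h.1⟩, ⟨j, h.2.1⟩), by simp [Fin.ext_iff, h.2.2]⟩ else false

lemma keiOp_inj (n : ℕ) :
    Function.Injective (fun g : {p : Fin (n/2) × Fin (n/2) // p.1 ≠ p.2} → Bool =>
      keiOp n (KExt (n/2) g)) := by
  intro g g' h
  funext p
  obtain ⟨⟨i, j⟩, hij⟩ := p
  have hij' : i.val ≠ j.val := fun hv => hij (by ext <;> simp [hv])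
  have hx : 2 * i.val < n := by have := i.isLt; omega
  have hy : 2 * j.val < n := by have := j.isLt; omega
  have := congrFun (congrFun h ⟨2 * i.val, hx⟩) ⟨2 * j.val, hy⟩
  have hval := congrArg Fin.val this
  rw [keiOp_val, keiOp_val] at hval
  have hd1 : (2 * i.val) / 2 = i.val := by omega
  have hd2 : (2 * j.val) / 2 = j.val := by omega
  rw [hd1, hd2] at hval
  have key : ∀ g0 : {p : Fin (n/2) × Fin (n/2) // p.1 ≠ p.2} → Bool,
      KC n (KExt (n/2) g0) i.val j.val ↔ g0 ⟨(i, j), hij⟩ = true := by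
    intro g0
    unfold KC KExt
    have h' : i.val < n/2 ∧ j.val < n/2 ∧ i.val ≠ j.val := ⟨i.isLt, j.isLt, hij'⟩
    simp only [dif_pos h']
    constructor
    · rintro ⟨-, -, -, hg⟩; convert hg
    · intro hg; exact ⟨hij', i.isLt, j.isLt, by convert hg⟩
  rw [if_congr (key g) rfl rfl, if_congr (key g') rfl rfl] at hval
  by_cases hg : g ⟨(i, j), hij⟩ = true <;> by_cases hg' : g' ⟨(i, j), hij⟩ = true <;>
    simp [hg, hg'] at hval ⊢
  · exact absurd hval (KPt_ne _)
  · exact absurd hval.symm (KPt_ne _)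

/-- For `n > 0` and `k = ⌊n/2⌋`, there are at least `2 ^ (k (k - 1))` distinct kei
operations on `Fin n`. -/
theorem kei_operations_lower_bound (n : ℕ) (hn : 0 < n) :
    2 ^ ((n / 2) * (n / 2 - 1)) ≤
      Nat.card {op : Fin n → Fin n → Fin n // IsKei op} := by
  set k := n / 2 with hk
  have hle := Nat.card_le_card_of_injective
    (fun g : {p : Fin k × Fin k // p.1 ≠ p.2} → Bool =>
      (⟨keiOp n (KExt k g), keiOp_isKei n _⟩ : {op : Fin n → Fin n → Fin n // IsKei op}))
    (fun g g' h => keiOp_inj n (congrArg Subtype.val h))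
  have hcard : Nat.card ({p : Fin k × Fin k // p.1 ≠ p.2} → Bool) = 2 ^ (k * k - k) := by
    rw [Nat.card_eq_fintype_card, Fintype.card_fun, Fintype.card_bool]
    congr 1
    have hdiag : Fintype.card {p : Fin k × Fin k // p.1 = p.2} = k := by
      rw [Fintype.card_congr
        (⟨fun p => p.1.1, fun a => ⟨(a, a), rfl⟩, fun p => by
            obtain ⟨⟨a, b⟩, h⟩ := p; cases h; rfl, fun a => rfl⟩ :
          {p : Fin k × Fin k // p.1 = p.2} ≃ Fin k)]
      exact Fintype.card_fin k
    have := Fintype.card_subtype_compl (fun p : Fin k × Fin k => p.1 = p.2)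
    rw [Fintype.card_congr (Equiv.subtypeEquivRight (fun p : Fin k × Fin k => Iff.rfl))] at this
    rw [this, hdiag, Fintype.card_prod, Fintype.card_fin]
  rw [hcard] at hle
  refine le_trans (Nat.pow_le_pow_right (by norm_num) ?_) hle
  cases k with
  | zero => simp
  | succ m => simp [Nat.mul_succ]
end

section
/- Let n > 2 and let G be a subgroup of Equiv.Perm (Fin n) with s orbits on Fin n, of sizes n₁, n₂, …, n_s. Then the number of rack operations ▷ on Fin n whose operator group equals G is at most (3^((n−1)/2))^s · (n₁ · n₂ ⋯ n_s); in particular it is at most 3^(n²/2) · 3^n. -/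
/-! A rack is determined by its right multiplications `R_y = (· ▷ y)`, and self-distributivity
says `R_{σ y} = σ R_y σ⁻¹` for every `σ` in the operator group `G`. So a rack with operator group
`G` is a conjugation-equivariant map `X → G`, which is determined by its values at one point `x`
of each orbit, and each such value lies in the centralizer `C` of the stabilizer `G_x`.
By orbit–stabilizer `|C| ≤ |G x| · |C_x|`, and `C_x` is an abelian group of permutations fixing
`x`. A faithful abelian action injects into the product of the orbits, whose sizes `k` satisfy
`k ≤ 3^(k/2)`; the fixed point `x` is an orbit of size `1`, whence `|C_x| ≤ 3^((n-1)/2)`. -/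

open MulAction Subgroup

namespace IsRack

variable {X : Type*} {op : X → X → X}

noncomputable def rightMul (h : IsRack op) (y : X) : Equiv.Perm X :=
  Equiv.ofBijective _ (h.1 y)

theorem rightMul_mem_opGroup (h : IsRack op) (y : X) : h.rightMul y ∈ OpGroup op :=
  subset_closure ⟨y, fun _ => rfl⟩

theorem rightMul_op (h : IsRack op) (y z : X) :
    h.rightMul (op y z) = h.rightMul z * h.rightMul y * (h.rightMul z)⁻¹ := by
  rw [eq_mul_inv_iff_mul_eq]
  ext x
  exact (h.2 x y z).symm

theorem rightMul_eq_conj_of_mem_opGroup (h : IsRack op) {σ : Equiv.Perm X}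
    (hσ : σ ∈ OpGroup op) (y : X) : h.rightMul (σ y) = σ * h.rightMul y * σ⁻¹ := by
  induction hσ using closure_induction generalizing y with
  | mem τ hτ =>
    obtain ⟨z, hz⟩ := hτ
    obtain rfl : τ = h.rightMul z := Equiv.ext hz
    exact h.rightMul_op y z
  | one => simp
  | mul σ τ _ _ hσ hτ =>
    rw [Equiv.Perm.mul_apply, hσ, hτ]
    group
  | inv σ _ hσ =>
    have hy := hσ (σ⁻¹ y)
    simp only [Equiv.Perm.coe_inv, Equiv.apply_symm_apply] at hy
    simp [hy, mul_assoc]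

end IsRack

def conjEquivariantMaps (G X : Type*) [Group G] [MulAction G X] : Set (X → G) :=
  {φ | ∀ (g : G) (y : X), φ (g • y) = g * φ y * g⁻¹}

theorem card_racks_with_opGroup_le {X : Type*} [Finite X] (G : Subgroup (Equiv.Perm X)) :
    Nat.card {op : X → X → X // IsRack op ∧ OpGroup op = G} ≤
      Nat.card (conjEquivariantMaps G X) := by
  refine Nat.card_le_card_of_injective
    (fun op => ⟨fun y => ⟨op.2.1.rightMul y, op.2.2.le (op.2.1.rightMul_mem_opGroup y)⟩,
      fun g y => Subtype.ext (op.2.1.rightMul_eq_conj_of_mem_opGroup (op.2.2.ge g.2) y)⟩) ?_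
  intro op op' h
  ext x y
  exact congrArg (fun φ : conjEquivariantMaps G X => (φ.1 y : Equiv.Perm X) x) h

namespace conjEquivariantMaps

variable {G X : Type*} [Group G] [MulAction G X] {φ : X → G}

theorem mem_centralizer_stabilizer (hφ : φ ∈ conjEquivariantMaps G X) (y : X) :
    φ y ∈ centralizer (stabilizer G y : Set G) := by
  intro g hg
  have := hφ g y
  rw [mem_stabilizer_iff.mp hg, eq_mul_inv_iff_mul_eq] at this
  exact this.symm

theorem eq_of_out_eq {ψ : X → G} (hφ : φ ∈ conjEquivariantMaps G X)
    (hψ : ψ ∈ conjEquivariantMaps G X)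
    (h : ∀ ω : orbitRel.Quotient G X, φ ω.out = ψ ω.out) : φ = ψ := by
  funext y
  obtain ⟨g, hg⟩ : y ∈ orbit G (Quotient.mk'' y : orbitRel.Quotient G X).out :=
    mem_orbit_symm.mp (Quotient.mk_out' (s₁ := orbitRel G X) y)
  have hx := h (Quotient.mk'' y)
  generalize (Quotient.mk'' y : orbitRel.Quotient G X).out = x at hg hx
  subst hg
  rw [hφ, hψ, hx]

theorem card_le [Finite G] [Fintype (orbitRel.Quotient G X)] :
    Nat.card (conjEquivariantMaps G X) ≤
      ∏ ω : orbitRel.Quotient G X, Nat.card (centralizer (stabilizer G ω.out : Set G)) := by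
  rw [← Nat.card_pi]
  refine Nat.card_le_card_of_injective
    (fun φ ω => ⟨φ.1 ω.out, mem_centralizer_stabilizer φ.2 ω.out⟩) ?_
  intro φ ψ h
  exact Subtype.ext (eq_of_out_eq φ.2 ψ.2 fun ω => congrArg Subtype.val (congrFun h ω))

end conjEquivariantMaps

theorem Nat.sq_le_three_pow (k : ℕ) : k ^ 2 ≤ 3 ^ k := by
  induction k with
  | zero => norm_num
  | succ k ih =>
    have : k < 3 ^ k := Nat.lt_pow_self (by norm_num)
    have : (k + 1) ^ 2 = k ^ 2 + 2 * k + 1 := by ring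
    rw [pow_succ 3 k]
    omega

theorem Finset.prod_sq_le_three_pow_sum {ι : Type*} (s : Finset ι) (f : ι → ℕ) :
    (∏ i ∈ s, f i) ^ 2 ≤ 3 ^ ∑ i ∈ s, f i := by
  rw [← Finset.prod_pow, ← Finset.prod_pow_eq_pow_sum]
  exact Finset.prod_le_prod' fun i _ => Nat.sq_le_three_pow (f i)

theorem natCast_le_three_rpow_half_of_sq_le {a m : ℕ} (h : a ^ 2 ≤ 3 ^ m) :
    (a : ℝ) ≤ 3 ^ ((m : ℝ) / 2) := by
  rw [div_eq_mul_one_div, Real.rpow_mul (by norm_num), Real.rpow_natCast, ← Real.sqrt_eq_rpow]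
  exact Real.le_sqrt_of_sq_le (by exact_mod_cast h)

namespace MulAction

variable {A X : Type*} [Group A] [MulAction A X]

theorem sum_card_orbit [Finite X] [Fintype (orbitRel.Quotient A X)] :
    ∑ ω : orbitRel.Quotient A X, Nat.card ω.orbit = Nat.card X :=
  (Nat.card_sigma.symm.trans (Nat.card_congr (selfEquivSigmaOrbits' A X).symm))

theorem prod_card_orbit_le_three_pow [Finite X] [Fintype (orbitRel.Quotient A X)] :
    ∏ ω : orbitRel.Quotient A X, Nat.card ω.orbit ≤ 3 ^ Nat.card X :=
  calc _ ≤ (∏ ω : orbitRel.Quotient A X, Nat.card ω.orbit) ^ 2 :=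
        Nat.le_self_pow two_ne_zero _
    _ ≤ 3 ^ ∑ ω : orbitRel.Quotient A X, Nat.card ω.orbit :=
        Finset.prod_sq_le_three_pow_sum _ _
    _ = 3 ^ Nat.card X := by rw [sum_card_orbit]

theorem card_le_prod_card_orbit [IsMulCommutative A] [FaithfulSMul A X] [Finite X]
    [Fintype (orbitRel.Quotient A X)] :
    Nat.card A ≤ ∏ ω : orbitRel.Quotient A X, Nat.card ω.orbit := by
  rw [← Nat.card_pi]
  refine Nat.card_le_card_of_injective (fun a ω => ⟨a • ω.out, ?_⟩) fun a b hab => ?_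
  · rw [orbitRel.Quotient.orbit_eq_orbit_out ω Quotient.out_eq']
    exact mem_orbit _ _
  refine FaithfulSMul.eq_of_smul_eq_smul (α := X) fun x => ?_
  obtain ⟨c, hc⟩ : x ∈ orbit A (Quotient.mk'' x : orbitRel.Quotient A X).out :=
    mem_orbit_symm.mp (Quotient.mk_out' (s₁ := orbitRel A X) x)
  have hab' := congrArg Subtype.val (congrFun hab (Quotient.mk'' x))
  dsimp only at hab'
  have hcomm := isMulCommutative_iff.mp ‹IsMulCommutative A›
  rw [← hc, smul_smul, hcomm a c, mul_smul, hab', ← mul_smul, hcomm c b, mul_smul]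

theorem card_sq_le_three_pow_of_mem_fixedPoints [IsMulCommutative A] [FaithfulSMul A X]
    [Finite X] {x₀ : X} (hx₀ : x₀ ∈ fixedPoints A X) :
    Nat.card A ^ 2 ≤ 3 ^ (Nat.card X - 1) := by
  classical
  have := Fintype.ofFinite (orbitRel.Quotient A X)
  let ω₀ : orbitRel.Quotient A X := Quotient.mk'' x₀
  have hω₀ : Nat.card ω₀.orbit = 1 := by
    have := Fintype.ofFinite (orbit A x₀)
    rw [orbitRel.Quotient.orbit_mk, Nat.card_eq_fintype_card]
    exact mem_fixedPoints_iff_card_orbit_eq_one.mp hx₀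
  calc Nat.card A ^ 2 ≤ (∏ ω : orbitRel.Quotient A X, Nat.card ω.orbit) ^ 2 :=
        Nat.pow_le_pow_left card_le_prod_card_orbit 2
    _ = (∏ ω ∈ Finset.univ.erase ω₀, Nat.card ω.orbit) ^ 2 := by
        rw [Finset.prod_erase _ (f := fun ω : orbitRel.Quotient A X => Nat.card ω.orbit) hω₀]
    _ ≤ 3 ^ ∑ ω ∈ Finset.univ.erase ω₀, Nat.card ω.orbit :=
        Finset.prod_sq_le_three_pow_sum _ _
    _ = 3 ^ (Nat.card X - 1) := by
      rw [← sum_card_orbit (A := A), ← Finset.add_sum_erase _ _ (Finset.mem_univ ω₀), hω₀,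
        Nat.add_sub_cancel_left]

theorem card_centralizer_stabilizer_le {G : Type*} [Group G] [MulAction G X]
    [FaithfulSMul G X] [Finite X] (x : X) :
    (Nat.card (centralizer (stabilizer G x : Set G)) : ℝ) ≤
      Nat.card (orbit G x) * 3 ^ (((Nat.card X : ℝ) - 1) / 2) := by
  set C := centralizer (stabilizer G x : Set G)
  have : IsMulCommutative (stabilizer C x) := isMulCommutative_iff.mpr fun a b =>
    Subtype.ext (Subtype.ext (b.1.2 a.1.1 a.2))
  have horbit : Nat.card (orbit C x) ≤ Nat.card (orbit G x) :=
    Nat.card_mono (Set.toFinite _) fun _ ⟨c, hc⟩ => ⟨c.1, hc⟩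
  have hstab : Nat.card (stabilizer C x) ^ 2 ≤ 3 ^ (Nat.card X - 1) :=
    card_sq_le_three_pow_of_mem_fixedPoints (A := stabilizer C x) fun a => a.2
  have hC : Nat.card C = Nat.card (orbit C x) * Nat.card (stabilizer C x) := by
    rw [← (stabilizer C x).card_mul_index, index_stabilizer, Nat.card_coe_set_eq, mul_comm]
  have hX : 1 ≤ Nat.card X := have : Nonempty X := ⟨x⟩; Nat.card_pos
  rw [hC, Nat.cast_mul]
  gcongr
  simpa [Nat.cast_sub hX] using natCast_le_three_rpow_half_of_sq_le hstab

end MulAction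

theorem three_rpow_half_sub_one_pow_le {n s : ℕ} (hs : s ≤ n) :
    ((3 : ℝ) ^ (((n : ℝ) - 1) / 2)) ^ s ≤ 3 ^ ((n : ℝ) ^ 2 / 2) := by
  rw [← Real.rpow_natCast, ← Real.rpow_mul (by norm_num)]
  apply Real.rpow_le_rpow_of_exponent_le (by norm_num)
  have : (s : ℝ) ≤ n := by exact_mod_cast hs
  nlinarith [s.cast_nonneg (α := ℝ)]

theorem rack_count_with_operator_group_general (n : ℕ)
    (G : Subgroup (Equiv.Perm (Fin n))) :
    (Nat.card {op : Fin n → Fin n → Fin n // IsRack op ∧ OpGroup op = G} : ℝ) ≤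
        ((3 : ℝ) ^ (((n : ℝ) - 1) / 2)) ^ Nat.card (MulAction.orbitRel.Quotient G (Fin n)) *
          ∏ᶠ o : MulAction.orbitRel.Quotient G (Fin n),
            (Nat.card (MulAction.orbitRel.Quotient.orbit o) : ℝ) ∧
    (Nat.card {op : Fin n → Fin n → Fin n // IsRack op ∧ OpGroup op = G} : ℝ) ≤
        (3 : ℝ) ^ ((n : ℝ) ^ 2 / 2) * 3 ^ n := by
  have := Fintype.ofFinite (orbitRel.Quotient G (Fin n))
  have hcentralizers := (card_racks_with_opGroup_le G).trans conjEquivariantMaps.card_le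
  have hfirst :
      (Nat.card {op : Fin n → Fin n → Fin n // IsRack op ∧ OpGroup op = G} : ℝ) ≤
      ((3 : ℝ) ^ (((n : ℝ) - 1) / 2)) ^ Nat.card (orbitRel.Quotient G (Fin n)) *
        ∏ᶠ ω : orbitRel.Quotient G (Fin n), (Nat.card ω.orbit : ℝ) := by
    calc _ ≤ ∏ ω : orbitRel.Quotient G (Fin n),
          (Nat.card (centralizer (stabilizer G ω.out : Set G)) : ℝ) := by
          exact_mod_cast hcentralizers
      _ ≤ ∏ ω : orbitRel.Quotient G (Fin n),
          (Nat.card ω.orbit * (3 : ℝ) ^ (((n : ℝ) - 1) / 2)) := by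
          refine Finset.prod_le_prod (fun _ _ => by positivity) fun ω _ => ?_
          simpa [orbitRel.Quotient.orbit_eq_orbit_out ω Quotient.out_eq'] using
            card_centralizer_stabilizer_le ω.out
      _ = _ := by
          rw [Finset.prod_mul_distrib, Finset.prod_const, finprod_eq_prod_of_fintype,
            Finset.card_univ, Nat.card_eq_fintype_card, mul_comm]
  refine ⟨hfirst, hfirst.trans (mul_le_mul ?_ ?_ (finprod_nonneg fun _ => by positivity)
    (by positivity))⟩
  · exact three_rpow_half_sub_one_pow_le
      ((Nat.card_le_card_of_surjective _ Quotient.mk''_surjective).trans (Nat.card_fin n).le)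
  · rw [finprod_eq_prod_of_fintype]
    exact_mod_cast (Nat.card_fin n ▸ prod_card_orbit_le_three_pow)

/-- For `n > 2` and `G ≤ Equiv.Perm (Fin n)` with `s` orbits of sizes `n₁, …, n_s`, the
number of rack operations on `Fin n` whose operator group equals `G` is at most
`(3 ^ ((n-1)/2))^s * (n₁ ⋯ n_s)`; in particular at most `3 ^ (n²/2) * 3 ^ n`. -/
theorem rack_count_with_operator_group (n : ℕ) (hn : 2 < n)
    (G : Subgroup (Equiv.Perm (Fin n))) :
    (Nat.card {op : Fin n → Fin n → Fin n // IsRack op ∧ OpGroup op = G} : ℝ) ≤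
        ((3 : ℝ) ^ (((n : ℝ) - 1) / 2)) ^ Nat.card (MulAction.orbitRel.Quotient G (Fin n)) *
          ∏ᶠ o : MulAction.orbitRel.Quotient G (Fin n),
            (Nat.card (MulAction.orbitRel.Quotient.orbit o) : ℝ) ∧
    (Nat.card {op : Fin n → Fin n → Fin n // IsRack op ∧ OpGroup op = G} : ℝ) ≤
        (3 : ℝ) ^ ((n : ℝ) ^ 2 / 2) * 3 ^ n :=
  rack_count_with_operator_group_general n G
end
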